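/- For the RK-RR iteration (randomized Kaczmarz with multiplicative weight decay factor μ ∈ (0,1)), the conditional expectation satisfies E[x_s - x_μ | x_r] = μ^{s-r} (I - A^T A / ||A||_F^2)^{s-r} (x_r - x_μ) for r < s, where x_μ is the ridge-regularized solution with λ = (1-μ)/μ · ||A||_F^2. -/

import Mathlib

open Matrix Finset
noncomputable section

/-- Squared Euclidean norm of a vector. -/
def vnormSq {k : ℕ} (x : Fin k → ℝ) : ℝ := ∑ i, x i ^ 2

/-- Squared Frobenius norm of a matrix. -/
def frobSq {n d : ℕ} (A : Matrix (Fin n) (Fin d) ℝ) : ℝ := ∑ i, vnormSq (A i)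

/-- Row sampling probability ‖a_i‖²/‖A‖_F² used by randomized Kaczmarz. -/
def rowProb {n d : ℕ} (A : Matrix (Fin n) (Fin d) ℝ) (i : Fin n) : ℝ := vnormSq (A i) / frobSq A

/-- Spectral norm (ℓ²-operator norm) of a matrix. -/
def matSpectralNorm {n d : ℕ} (M : Matrix (Fin n) (Fin d) ℝ) : ℝ :=
  ‖LinearMap.toContinuousLinearMap (Matrix.toEuclideanLin M)‖

/-- The four Penrose conditions characterizing the Moore–Penrose pseudoinverse. -/
def IsMoorePenrose {n d : ℕ} (A : Matrix (Fin n) (Fin d) ℝ) (Ap : Matrix (Fin d) (Fin n) ℝ) : Prop :=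
  A * Ap * A = A ∧ Ap * A * Ap = Ap ∧ (A * Ap)ᵀ = A * Ap ∧ (Ap * A)ᵀ = Ap * A

/-- Demmel condition number κ_dem = ‖A⁺‖ ‖A‖_F. -/
def kdem {n d : ℕ} (A : Matrix (Fin n) (Fin d) ℝ) (Ap : Matrix (Fin d) (Fin n) ℝ) : ℝ :=
  matSpectralNorm Ap * Real.sqrt (frobSq A)

/-- One randomized Kaczmarz update using row i. -/
def rkStep {n d : ℕ} (A : Matrix (Fin n) (Fin d) ℝ) (b : Fin n → ℝ) (i : Fin n) (x : Fin d → ℝ) :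
    Fin d → ℝ := x + ((b i - A i ⬝ᵥ x) / vnormSq (A i)) • A i

/-- Randomized Kaczmarz iterates along a fixed path ω of row indices. -/
def rkSeq {n d : ℕ} (A : Matrix (Fin n) (Fin d) ℝ) (b : Fin n → ℝ) (x0 : Fin d → ℝ)
    (ω : ℕ → Fin n) : ℕ → Fin d → ℝ
  | 0 => x0
  | t + 1 => rkStep A b (ω t) (rkSeq A b x0 ω t)

/-- Extend a finite path of indices to an infinite one. -/
def extendPath {n T : ℕ} [NeZero n] (ω : Fin T → Fin n) : ℕ → Fin n :=
  fun s => if h : s < T then ω ⟨s, h⟩ else 0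

/-- Probability of a finite path of i.i.d. row indices. -/
def pathWeight {n d T : ℕ} (A : Matrix (Fin n) (Fin d) ℝ) (ω : Fin T → Fin n) : ℝ :=
  ∏ t, rowProb A (ω t)

/-- The expected one-step Kaczmarz contraction matrix I - AᵀA/‖A‖_F². -/
def kacMat {n d : ℕ} (A : Matrix (Fin n) (Fin d) ℝ) : Matrix (Fin d) (Fin d) ℝ :=
  1 - (frobSq A)⁻¹ • (Aᵀ * A)

/-- x lies in the row space range(Aᵀ). -/
def inRowSpace {n d : ℕ} (A : Matrix (Fin n) (Fin d) ℝ) (x : Fin d → ℝ) : Prop :=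
  ∃ u : Fin n → ℝ, x = Aᵀ *ᵥ u

/-- RK-RR iterates: Kaczmarz step followed by weight decay by μ. -/
def rrSeq {n d : ℕ} (A : Matrix (Fin n) (Fin d) ℝ) (b : Fin n → ℝ) (μ : ℝ) (x0 : Fin d → ℝ)
    (ω : ℕ → Fin n) : ℕ → Fin d → ℝ
  | 0 => x0
  | t + 1 => μ • rkStep A b (ω t) (rrSeq A b μ x0 ω t)

/-- Orthogonal projection step (I - a aᵀ/‖a‖²) x for row a = A i. -/
def projStep {n d : ℕ} (A : Matrix (Fin n) (Fin d) ℝ) (i : Fin n) (x : Fin d → ℝ) : Fin d → ℝ :=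
  x - ((A i ⬝ᵥ x) / vnormSq (A i)) • A i

/-- RK-RR bias sequence m_{t+1} = μ (I - a aᵀ/‖a‖²) m_t. -/
def biasSeq {n d : ℕ} (A : Matrix (Fin n) (Fin d) ℝ) (μ : ℝ) (m0 : Fin d → ℝ)
    (ω : ℕ → Fin n) : ℕ → Fin d → ℝ
  | 0 => m0
  | t + 1 => μ • projStep A (ω t) (biasSeq A μ m0 ω t)

/-- RK-RR variance sequence v_{t+1} = μ(I - aaᵀ/‖a‖²)v_t + μ (b_i - aᵀx_μ)a/‖a‖² - (1-μ)x_μ. -/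
def varSeq {n d : ℕ} (A : Matrix (Fin n) (Fin d) ℝ) (b : Fin n → ℝ) (μ : ℝ) (xmu : Fin d → ℝ)
    (ω : ℕ → Fin n) : ℕ → Fin d → ℝ
  | 0 => 0
  | t + 1 => μ • projStep A (ω t) (varSeq A b μ xmu ω t)
      + (μ * ((b (ω t) - A (ω t) ⬝ᵥ xmu) / vnormSq (A (ω t)))) • A (ω t)
      - (1 - μ) • xmu

/-- Covariance matrix Σ = I_m + v 1_m 1_mᵀ. -/
def covM (m : ℕ) (v : ℝ) : Matrix (Fin m) (Fin m) ℝ := 1 + v • Matrix.of fun _ _ => 1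

/-- Block Σ_{S,T} of the covariance matrix Σ = I + v 1 1ᵀ. -/
def subBlock {m : ℕ} (v : ℝ) (S T : Finset (Fin m)) : Matrix ↥S ↥T ℝ :=
  (covM m v).submatrix (fun i => i.1) (fun j => j.1)

/-- A deterministic adaptive algorithm that accesses at most t entries of b
(given full access to A) and outputs an estimate of the least-squares solution. -/
structure RowAccessAlg (d t : ℕ) where
  query : (n : ℕ) → Matrix (Fin n) (Fin d) ℝ → (j : Fin t) → (Fin (j : ℕ) → ℝ) → Fin n
  output : (n : ℕ) → Matrix (Fin n) (Fin d) ℝ → (Fin t → ℝ) → Fin d → ℝ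

/-- The successive answers to the algorithm's adaptive queries. -/
def RowAccessAlg.answers {d t : ℕ} (alg : RowAccessAlg d t) (n : ℕ)
    (A : Matrix (Fin n) (Fin d) ℝ) (b : Fin n → ℝ) : (j : ℕ) → j < t → ℝ
  | j, h => b (alg.query n A ⟨j, h⟩ fun i => alg.answers n A b i (i.isLt.trans h))
  termination_by j _ => j

/-- The algorithm's output estimate on the problem (A, b). -/
def RowAccessAlg.run {d t : ℕ} (alg : RowAccessAlg d t) (n : ℕ)
    (A : Matrix (Fin n) (Fin d) ℝ) (b : Fin n → ℝ) : Fin d → ℝ :=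
  alg.output n A fun j => alg.answers n A b j j.isLt

/-! Averaged over the row index, one RK-RR step is the affine map
`x ↦ μ (x + Aᵀ(b - Ax)/‖A‖_F²)`. The ridge normal equations with `λ = (1-μ)/μ ‖A‖_F²` make `x_μ`
its fixed point, so it equals `x ↦ x_μ + μ (I - AᵀA/‖A‖_F²)(x - x_μ)`. Path weights are products,
so the expectation over `k + 1` steps is this affine map applied to the `k`-step expectation, and
induction on `k` gives the claim. -/

section RKRR
variable {n d : ℕ}

lemma vnormSq_pos {k : ℕ} {x : Fin k → ℝ} (hx : x ≠ 0) : 0 < vnormSq x := by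
  obtain ⟨j, hj⟩ := Function.ne_iff.mp hx
  exact Finset.sum_pos' (fun i _ => sq_nonneg (x i)) ⟨j, mem_univ j, sq_pos_of_ne_zero hj⟩

lemma frobSq_pos [NeZero n] {A : Matrix (Fin n) (Fin d) ℝ} (hrows : ∀ i, A i ≠ 0) :
    0 < frobSq A :=
  Finset.sum_pos (fun i _ => vnormSq_pos (hrows i)) univ_nonempty

lemma sum_rowProb {A : Matrix (Fin n) (Fin d) ℝ} (hA : frobSq A ≠ 0) :
    ∑ i, rowProb A i = 1 := by
  simp only [rowProb, ← Finset.sum_div]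
  exact div_self hA

lemma sum_rowProb_smul_rkStep {A : Matrix (Fin n) (Fin d) ℝ} (hrows : ∀ i, A i ≠ 0)
    (hA : frobSq A ≠ 0) (b : Fin n → ℝ) (x : Fin d → ℝ) :
    ∑ i, rowProb A i • rkStep A b i x = x + (frobSq A)⁻¹ • (Aᵀ *ᵥ (b - A *ᵥ x)) := by
  have hrow (i : Fin n) : rowProb A i • rkStep A b i x
      = rowProb A i • x + (frobSq A)⁻¹ • ((b - A *ᵥ x) i • A i) := by
    have := (vnormSq_pos (hrows i)).ne'
    rw [rkStep, smul_add, smul_smul, smul_smul, rowProb]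
    congr 2
    simp only [Pi.sub_apply, mulVec, dotProduct_comm]
    field_simp
  rw [Finset.sum_congr rfl fun i _ => hrow i, sum_add_distrib, ← sum_smul, sum_rowProb hA,
    one_smul, ← Finset.smul_sum, mulVec_transpose, vecMul_eq_sum]

lemma sum_rowProb_smul_smul_rkStep_sub [NeZero n] {A : Matrix (Fin n) (Fin d) ℝ}
    (hrows : ∀ i, A i ≠ 0) (b : Fin n → ℝ) {μ : ℝ} (hμ : μ ≠ 0)
    {lam : ℝ} (hlam : lam = (1 - μ) / μ * frobSq A)
    {xmu : Fin d → ℝ} (hxmu : Aᵀ *ᵥ (b - A *ᵥ xmu) = lam • xmu) (x : Fin d → ℝ) :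
    ∑ i, rowProb A i • (μ • rkStep A b i x - xmu) = μ • (kacMat A *ᵥ (x - xmu)) := by
  have hA := (frobSq_pos hrows).ne'
  have hdecay : μ * ((frobSq A)⁻¹ * lam) = 1 - μ := by
    rw [hlam]; field_simp
  have hres : Aᵀ *ᵥ (b - A *ᵥ x) = lam • xmu - Aᵀ *ᵥ (A *ᵥ (x - xmu)) := by
    rw [← hxmu, ← mulVec_sub, mulVec_sub A x xmu]
    congr 1; abel
  calc ∑ i, rowProb A i • (μ • rkStep A b i x - xmu)
      = μ • ∑ i, rowProb A i • rkStep A b i x - xmu := by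
        simp only [smul_sub, sum_sub_distrib, ← sum_smul, sum_rowProb hA, one_smul,
          smul_comm _ μ, ← smul_sum]
    _ = μ • (x + (frobSq A)⁻¹ • (lam • xmu - Aᵀ *ᵥ (A *ᵥ (x - xmu)))) - xmu := by
        rw [sum_rowProb_smul_rkStep hrows hA, hres]
    _ = μ • (kacMat A *ᵥ (x - xmu)) := by
        rw [kacMat, sub_mulVec, one_mulVec, smul_mulVec, ← mulVec_mulVec]
        linear_combination (norm := module) hdecay • xmu

lemma rrSeq_congr (A : Matrix (Fin n) (Fin d) ℝ) (b : Fin n → ℝ) (μ : ℝ) (x0 : Fin d → ℝ)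
    {ω ω' : ℕ → Fin n} {m : ℕ} (h : ∀ t < m, ω t = ω' t) :
    rrSeq A b μ x0 ω m = rrSeq A b μ x0 ω' m := by
  induction m with
  | zero => rfl
  | succ m ih =>
    rw [rrSeq, rrSeq, h m m.lt_succ_self, ih fun t ht => h t (Nat.lt_succ_of_lt ht)]

lemma rrSeq_extendPath_snoc [NeZero n] (A : Matrix (Fin n) (Fin d) ℝ) (b : Fin n → ℝ) (μ : ℝ)
    (x0 : Fin d → ℝ) {k : ℕ} (ω : Fin k → Fin n) (i : Fin n) :
    rrSeq A b μ x0 (extendPath (Fin.snoc ω i)) (k + 1)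
      = μ • rkStep A b i (rrSeq A b μ x0 (extendPath ω) k) := by
  have hprefix : ∀ t < k, extendPath (Fin.snoc ω i) t = extendPath ω t := fun t ht => by
    simp [extendPath, ht, Nat.lt_succ_of_lt ht, Fin.snoc, Fin.castLT]
  have hlast : extendPath (Fin.snoc ω i) k = i := by simp [extendPath, Fin.snoc]
  rw [rrSeq, hlast, rrSeq_congr A b μ x0 hprefix]

lemma pathWeight_snoc (A : Matrix (Fin n) (Fin d) ℝ) {k : ℕ} (ω : Fin k → Fin n) (i : Fin n) :
    pathWeight A (Fin.snoc ω i) = pathWeight A ω * rowProb A i := by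
  simp [pathWeight, Fin.prod_univ_castSucc]

lemma sum_pathWeight_smul_succ {M : Type*} [AddCommGroup M] [Module ℝ M]
    (A : Matrix (Fin n) (Fin d) ℝ) {k : ℕ} (f : (Fin (k + 1) → Fin n) → M) :
    ∑ ω, pathWeight A ω • f ω = ∑ ω, pathWeight A ω • ∑ i, rowProb A i • f (Fin.snoc ω i) := by
  rw [← (Fin.snocEquiv fun _ => Fin n).sum_comp, Fintype.sum_prod_type, sum_comm]
  refine sum_congr rfl fun ω _ => ?_
  simp only [smul_sum, smul_smul]
  exact sum_congr rfl fun i _ => by rw [← pathWeight_snoc]; rfl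

end RKRR

theorem rkrr_multistep_expectation_general {n d : ℕ} [NeZero n]
    (A : Matrix (Fin n) (Fin d) ℝ) (b : Fin n → ℝ) (hrows : ∀ i, A i ≠ 0)
    (μ : ℝ) (hμ0 : 0 < μ)
    (lam : ℝ) (hlam : lam = (1 - μ) / μ * frobSq A)
    (xmu : Fin d → ℝ) (hxmu : Aᵀ *ᵥ (b - A *ᵥ xmu) = lam • xmu)
    (y : Fin d → ℝ) (k : ℕ) :
    ∑ ω : Fin k → Fin n, pathWeight A ω • (rrSeq A b μ y (extendPath ω) k - xmu)
      = μ ^ k • ((kacMat A ^ k) *ᵥ (y - xmu)) := by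
  induction k with
  | zero => simp [pathWeight, rrSeq]
  | succ k ih =>
    calc _ = ∑ ω : Fin k → Fin n, pathWeight A ω •
          μ • (kacMat A *ᵥ (rrSeq A b μ y (extendPath ω) k - xmu)) := by
          simp only [sum_pathWeight_smul_succ A, rrSeq_extendPath_snoc,
            sum_rowProb_smul_smul_rkStep_sub hrows b hμ0.ne' hlam hxmu]
      _ = μ • (kacMat A *ᵥ ∑ ω : Fin k → Fin n,
          pathWeight A ω • (rrSeq A b μ y (extendPath ω) k - xmu)) := by
          simp only [mulVec_sum, mulVec_smul, smul_sum, smul_comm μ]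
      _ = _ := by rw [ih, mulVec_smul, mulVec_mulVec, smul_smul, ← pow_succ', ← pow_succ']

/-- multi-step conditional expectation for RK-RR:
E[x_s - x_μ | x_r] = μ^{s-r} (I - AᵀA/‖A‖_F²)^{s-r} (x_r - x_μ), where x_μ is the
ridge solution with λ = (1-μ)/μ ‖A‖_F², characterized by Aᵀ(b - Ax_μ) = λ x_μ.
Here `y` plays the role of x_r and `k = s - r ≥ 1`. -/
theorem rkrr_multistep_expectation {n d : ℕ} [NeZero n]
    (A : Matrix (Fin n) (Fin d) ℝ) (b : Fin n → ℝ) (hrows : ∀ i, A i ≠ 0)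
    (μ : ℝ) (hμ0 : 0 < μ) (hμ1 : μ < 1)
    (lam : ℝ) (hlam : lam = (1 - μ) / μ * frobSq A)
    (xmu : Fin d → ℝ) (hxmu : Aᵀ *ᵥ (b - A *ᵥ xmu) = lam • xmu)
    (y : Fin d → ℝ) (k : ℕ) (hk : 0 < k) :
    ∑ ω : Fin k → Fin n, pathWeight A ω • (rrSeq A b μ y (extendPath ω) k - xmu)
      = μ ^ k • ((kacMat A ^ k) *ᵥ (y - xmu)) :=
  rkrr_multistep_expectation_general A b hrows μ hμ0 lam hlam xmu hxmu y k
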